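/- Let f ∈ L²(Ω), let u be a weak solution of the fractional Laplacian problem and ũ a weak solution of the truncated nonlocal problem, both with the same data f, and let v be a test function such that the integrand of B_{ℝⁿ×ℝⁿ}(u,v) and the integrand of B_T(ũ,v) are absolutely integrable. Then, with T' = {(x,y) ∈ (Ω∪Ω_I)×(Ω∪Ω_I) : |y−x| ≥ λ} and Ω_c = ℝⁿ∖(Ω∪Ω_I), one has |B_T(u−ũ, v)| ≤ |B_{T'}(u,v)| + |B_{(Ω∪Ω_I)×Ω_c}(u,v)| + |B_{Ω_c×ℝⁿ}(u,v)|. -/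

import Mathlib

open MeasureTheory Real Set

noncomputable section

abbrev Eucl (n : ℕ) := EuclideanSpace ℝ (Fin n)

/-- The normalizing constant `c_{n,s}` of the fractional Laplacian. -/
def cns (n : ℕ) (s : ℝ) : ℝ :=
  s * (2 : ℝ) ^ (2 * s) * Real.Gamma ((n + 2) / 2) /
    (Real.Gamma (1 / 2) * Real.Gamma (1 - s))

/-- The interaction domain `Ω_I = {y ∈ ℝⁿ∖Ω : |y−x| < λ for some x ∈ Ω}`. -/
def interDom {n : ℕ} (Ω : Set (Eucl n)) (lam : ℝ) : Set (Eucl n) :=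
  {y | y ∉ Ω ∧ ∃ x ∈ Ω, ‖y - x‖ < lam}

/-- The bilinear form `B_S(u,v) = ∬_S (u(y)−u(x))(v(y)−v(x))/|y−x|^{n+2s} dy dx`. -/
def Bform {n : ℕ} (s : ℝ) (S : Set (Eucl n × Eucl n)) (u v : Eucl n → ℝ) : ℝ :=
  ∫ p in S, (u p.2 - u p.1) * (v p.2 - v p.1) / ‖p.2 - p.1‖ ^ ((n : ℝ) + 2 * s)

/-- `T = {(x,y) ∈ (Ω∪Ω_I)×(Ω∪Ω_I) : |y−x| < λ}`. -/
def Tset {n : ℕ} (Ω : Set (Eucl n)) (lam : ℝ) : Set (Eucl n × Eucl n) :=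
  {p | p.1 ∈ Ω ∪ interDom Ω lam ∧ p.2 ∈ Ω ∪ interDom Ω lam ∧ ‖p.2 - p.1‖ < lam}

/-- The energy seminorm `|||v||| = ((c_{n,s}/4)·B_T(v,v))^{1/2}`. -/
def energyNorm {n : ℕ} (s : ℝ) (Ω : Set (Eucl n)) (lam : ℝ) (v : Eucl n → ℝ) : ℝ :=
  Real.sqrt (cns n s / 4 * Bform s (Tset Ω lam) v v)

/-- The `H^s(D)` norm `(∫_D v² + B_{D×D}(v,v))^{1/2}`. -/
def HsNorm {n : ℕ} (s : ℝ) (D : Set (Eucl n)) (v : Eucl n → ℝ) : ℝ :=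
  Real.sqrt ((∫ x in D, v x ^ 2) + Bform s (D ×ˢ D) v v)

/-- The `L²(Ω)` norm. -/
def L2NormOn {n : ℕ} (Ω : Set (Eucl n)) (v : Eucl n → ℝ) : ℝ :=
  Real.sqrt (∫ x in Ω, v x ^ 2)

/-- The integrand of `B_S(u,v)`. -/
def gagIntegrand {n : ℕ} (s : ℝ) (u v : Eucl n → ℝ) : Eucl n × Eucl n → ℝ :=
  fun p => (u p.2 - u p.1) * (v p.2 - v p.1) / ‖p.2 - p.1‖ ^ ((n : ℝ) + 2 * s)

/-- A test function: measurable, square-integrable, vanishing a.e. off `Ω`,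
with finite Gagliardo energy. -/
def IsTestFun {n : ℕ} (s : ℝ) (Ω : Set (Eucl n)) (v : Eucl n → ℝ) : Prop :=
  Measurable v ∧ Integrable (fun x => v x ^ 2) ∧ (∀ᵐ x ∂volume, x ∉ Ω → v x = 0) ∧
    Integrable (fun p : Eucl n × Eucl n =>
      (v p.2 - v p.1) ^ 2 / ‖p.2 - p.1‖ ^ ((n : ℝ) + 2 * s))

/-- Weak solution of the fractional Laplacian problem with data `f`. -/
def IsFracSol {n : ℕ} (s : ℝ) (Ω : Set (Eucl n)) (f u : Eucl n → ℝ) : Prop :=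
  IsTestFun s Ω u ∧ ∀ v, IsTestFun s Ω v →
    Integrable (gagIntegrand s u v) ∧
    cns n s / 2 * Bform s Set.univ u v = ∫ x in Ω, f x * v x

/-- Weak solution of the truncated nonlocal problem with data `f`. -/
def IsTruncSol {n : ℕ} (s : ℝ) (Ω : Set (Eucl n)) (lam : ℝ) (f u : Eucl n → ℝ) : Prop :=
  IsTestFun s Ω u ∧ ∀ v, IsTestFun s Ω v →
    IntegrableOn (gagIntegrand s u v) (Tset Ω lam) ∧
    cns n s / 2 * Bform s (Tset Ω lam) u v = ∫ x in Ω, f x * v x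

/-!
Testing both weak formulations with the same `v` gives `c_{n,s}/2 · B_{ℝⁿ×ℝⁿ}(u,v) = ∫ f v =
c_{n,s}/2 · B_T(ũ,v)`, and `c_{n,s} > 0`, so `B_{ℝⁿ×ℝⁿ}(u,v) = B_T(ũ,v)`. The space `ℝⁿ × ℝⁿ`
is the disjoint union of `T`, `T'`, `(Ω∪Ω_I) × Ω_c` and `Ω_c × ℝⁿ`, so
`B_T(u − ũ, v) = B_T(u,v) − B_{ℝⁿ×ℝⁿ}(u,v)` is minus the sum of the other three pieces, and the
triangle inequality concludes.
-/

theorem cns_pos (n : ℕ) {s : ℝ} (hs : s ∈ Ioo (0 : ℝ) 1) : 0 < cns n s := by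
  obtain ⟨hs0, hs1⟩ := hs
  have hΓn : 0 < Real.Gamma ((n + 2) / 2) := Real.Gamma_pos_of_pos (by positivity)
  have hΓhalf : 0 < Real.Gamma (1 / 2) := Real.Gamma_pos_of_pos (by norm_num)
  have hΓs : 0 < Real.Gamma (1 - s) := Real.Gamma_pos_of_pos (by linarith)
  unfold cns
  positivity

theorem union_interDom_eq {n : ℕ} (Ω : Set (Eucl n)) (lam : ℝ) :
    Ω ∪ interDom Ω lam = Ω ∪ ⋃ x ∈ Ω, Metric.ball x lam := by
  ext y
  simp only [interDom, mem_union, mem_ofPred_eq, mem_iUnion, Metric.mem_ball, dist_eq_norm,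
    exists_prop]
  tauto

theorem IsOpen.union_interDom {n : ℕ} {Ω : Set (Eucl n)} (hΩ : IsOpen Ω) (lam : ℝ) :
    IsOpen (Ω ∪ interDom Ω lam) := by
  rw [union_interDom_eq]
  exact hΩ.union (isOpen_biUnion fun _ _ => Metric.isOpen_ball)

section Bform

variable {n : ℕ} {s : ℝ} {u v w : Eucl n → ℝ}

theorem Bform_eq_setIntegral (S : Set (Eucl n × Eucl n)) :
    Bform s S u v = ∫ p in S, gagIntegrand s u v p := rfl

theorem Bform_sub_left {S : Set (Eucl n × Eucl n)} (hu : IntegrableOn (gagIntegrand s u w) S)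
    (hv : IntegrableOn (gagIntegrand s v w) S) :
    Bform s S (u - v) w = Bform s S u w - Bform s S v w := by
  simp only [Bform_eq_setIntegral]
  rw [← integral_sub hu hv]
  congr 1 with p
  simp only [gagIntegrand, Pi.sub_apply]
  ring

theorem Bform_univ_eq_add {G : Set (Eucl n)} (hG : MeasurableSet G) (lam : ℝ)
    (hi : Integrable (gagIntegrand s u v)) :
    Bform s univ u v =
      Bform s {p | p.1 ∈ G ∧ p.2 ∈ G ∧ ‖p.2 - p.1‖ < lam} u v +
        (Bform s {p | p.1 ∈ G ∧ p.2 ∈ G ∧ lam ≤ ‖p.2 - p.1‖} u v +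
          Bform s (G ×ˢ Gᶜ) u v + Bform s (Gᶜ ×ˢ univ) u v) := by
  set near : Set (Eucl n × Eucl n) := {p | p.1 ∈ G ∧ p.2 ∈ G ∧ ‖p.2 - p.1‖ < lam}
  set far : Set (Eucl n × Eucl n) := {p | p.1 ∈ G ∧ p.2 ∈ G ∧ lam ≤ ‖p.2 - p.1‖}
  have hdist : Measurable fun p : Eucl n × Eucl n => ‖p.2 - p.1‖ := by fun_prop
  have hnear : MeasurableSet near :=
    (measurable_fst hG).inter ((measurable_snd hG).inter (measurableSet_lt hdist measurable_const))
  have hleave : MeasurableSet (G ×ˢ Gᶜ) := hG.prod hG.compl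
  have hout : MeasurableSet (Gᶜ ×ˢ (univ : Set (Eucl n))) := hG.compl.prod MeasurableSet.univ
  have hcompl : nearᶜ = far ∪ G ×ˢ Gᶜ ∪ Gᶜ ×ˢ univ := by
    ext p
    simp only [near, far, mem_compl_iff, mem_union, mem_ofPred_eq, mem_prod, mem_univ, and_true,
      not_and, not_lt]
    tauto
  have hdisj₁ : Disjoint far (G ×ˢ Gᶜ) :=
    disjoint_left.2 fun _ hp hq => hq.2 hp.2.1
  have hdisj₂ : Disjoint (far ∪ G ×ˢ Gᶜ) (Gᶜ ×ˢ univ) :=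
    disjoint_left.2 fun _ hp hq => hq.1 (hp.elim (·.1) (·.1))
  simp only [Bform_eq_setIntegral]
  rw [setIntegral_univ, ← integral_add_compl hnear hi, hcompl,
    setIntegral_union hdisj₂ hout hi.integrableOn hi.integrableOn,
    setIntegral_union hdisj₁ hleave hi.integrableOn hi.integrableOn]

end Bform

theorem Bform_univ_eq_Bform_Tset {n : ℕ} {s : ℝ} (hs : s ∈ Ioo (0 : ℝ) 1) {Ω : Set (Eucl n)}
    {lam : ℝ} {f u ut v : Eucl n → ℝ} (hu : IsFracSol s Ω f u) (hut : IsTruncSol s Ω lam f ut)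
    (hv : IsTestFun s Ω v) :
    Bform s univ u v = Bform s (Tset Ω lam) ut v := by
  have hc : cns n s / 2 ≠ 0 := (half_pos (cns_pos n hs)).ne'
  exact mul_left_cancel₀ hc ((hu.2 v hv).2.trans (hut.2 v hv).2.symm)

theorem stmt8_general (n : ℕ) (s : ℝ) (hs : s ∈ Set.Ioo (0 : ℝ) 1)
    (Ω : Set (Eucl n)) (hΩo : IsOpen Ω)
    (lam : ℝ)
    (f : Eucl n → ℝ)
    (u ut : Eucl n → ℝ) (hu : IsFracSol s Ω f u) (hut : IsTruncSol s Ω lam f ut)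
    (v : Eucl n → ℝ) (hv : IsTestFun s Ω v) :
    |Bform s (Tset Ω lam) (u - ut) v| ≤
      |Bform s {p : Eucl n × Eucl n |
          p.1 ∈ Ω ∪ interDom Ω lam ∧ p.2 ∈ Ω ∪ interDom Ω lam ∧ lam ≤ ‖p.2 - p.1‖} u v| +
      |Bform s ((Ω ∪ interDom Ω lam) ×ˢ (Ω ∪ interDom Ω lam)ᶜ) u v| +
      |Bform s ((Ω ∪ interDom Ω lam)ᶜ ×ˢ (Set.univ : Set (Eucl n))) u v| := by
  have hiu : Integrable (gagIntegrand s u v) := (hu.2 v hv).1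
  have hsplit := Bform_univ_eq_add (hΩo.union_interDom lam).measurableSet lam hiu
  rw [Bform_univ_eq_Bform_Tset hs hu hut hv] at hsplit
  rw [Bform_sub_left hiu.integrableOn (hut.2 v hv).1]
  unfold Tset at hsplit ⊢
  rw [hsplit, sub_add_cancel_left, abs_neg]
  exact (abs_add_le _ _).trans (add_le_add (abs_add_le _ _) le_rfl)

/-- Let `u` be a weak solution of the fractional Laplacian problem and
`ũ` a weak solution of the truncated nonlocal problem with the same data `f ∈ L²(Ω)`, and
let `v` be a test function with the integrands of `B_{ℝⁿ×ℝⁿ}(u,v)` and `B_T(ũ,v)`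
absolutely integrable. Then, with `T' = {(x,y) ∈ (Ω∪Ω_I)² : |y−x| ≥ λ}` and
`Ω_c = ℝⁿ∖(Ω∪Ω_I)`,
`|B_T(u−ũ,v)| ≤ |B_{T'}(u,v)| + |B_{(Ω∪Ω_I)×Ω_c}(u,v)| + |B_{Ω_c×ℝⁿ}(u,v)|`. -/
theorem stmt8 (n : ℕ) (hn : 1 ≤ n) (s : ℝ) (hs : s ∈ Set.Ioo (0 : ℝ) 1)
    (Ω : Set (Eucl n)) (hΩne : Ω.Nonempty) (hΩo : IsOpen Ω) (hΩb : Bornology.IsBounded Ω)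
    (lam : ℝ) (hlam : 0 < lam)
    (f : Eucl n → ℝ) (hf : Measurable f) (hf2 : IntegrableOn (fun x => f x ^ 2) Ω)
    (u ut : Eucl n → ℝ) (hu : IsFracSol s Ω f u) (hut : IsTruncSol s Ω lam f ut)
    (v : Eucl n → ℝ) (hv : IsTestFun s Ω v)
    (hiu : Integrable (gagIntegrand s u v))
    (hiut : IntegrableOn (gagIntegrand s ut v) (Tset Ω lam)) :
    |Bform s (Tset Ω lam) (u - ut) v| ≤
      |Bform s {p : Eucl n × Eucl n |
          p.1 ∈ Ω ∪ interDom Ω lam ∧ p.2 ∈ Ω ∪ interDom Ω lam ∧ lam ≤ ‖p.2 - p.1‖} u v| +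
      |Bform s ((Ω ∪ interDom Ω lam) ×ˢ (Ω ∪ interDom Ω lam)ᶜ) u v| +
      |Bform s ((Ω ∪ interDom Ω lam)ᶜ ×ˢ (Set.univ : Set (Eucl n))) u v| :=
  stmt8_general n s hs Ω hΩo lam f u ut hu hut v hv
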